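/- Let T′ > 0, let C₁ : [0,∞)² → [1,∞) and C₂ : [0,∞)² → [1,∞) be increasing in each argument, and let C₃, C₄ : [0,∞) → [1,∞) be increasing. Let M : [0,T′] → [0,∞) be continuous and k : [0,T′] → [0,∞) be any function, and assume: (i) for every t ∈ [0,T′] with t·C₁(M(t), k(0)) < 1, k(t) ≤ k(0)/(1 − t·C₁(M(t), k(0))) + t·C₃(M(t)); (ii) for every t ∈ [0,T′], M(t) ≤ C₂(k(t), t·C₄(M(t))) · (M(0) + t·C₄(M(t))). Define M̄ := 2·C₂(4k(0), 4k(0))·(M(0) + 2k(0)) and T := min{ 2k(0)/C₃(2M̄), 1/(2·C₁(2M̄, k(0))), 2k(0)/C₄(2M̄) }. If T′ ≤ T, then M(t) ≤ 2M̄ for every t ∈ [0,T′]. -/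

import Mathlib

open MeasureTheory Set Filter
open scoped Topology ENNReal

noncomputable section

namespace KdVPaper

/-- The Fourier transform of (the complexification of) a real-valued function on `ℝ`. -/
def FT (u : ℝ → ℝ) : ℝ → ℂ := FourierTransform.fourier (fun x : ℝ => (u x : ℂ))

/-- The integrand of the squared Sobolev `H^s` norm. -/
def hsInt (s : ℝ) (u : ℝ → ℝ) (ξ : ℝ) : ℝ := (1 + ξ ^ 2) ^ s * ‖FT u ξ‖ ^ 2

/-- Membership in the Sobolev space `H^s(ℝ)`. -/
def MemHs (s : ℝ) (u : ℝ → ℝ) : Prop := Integrable (hsInt s u)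

/-- The Sobolev `H^s` norm. -/
def sobolevNorm (s : ℝ) (u : ℝ → ℝ) : ℝ := (∫ ξ : ℝ, hsInt s u ξ) ^ ((1 : ℝ) / 2)

/-- Points of `ℝ⁶`, with coordinates `(z₃, z₂, z₁, z₀, x, t)`. -/
abbrev R6 : Type := Fin 6 → ℝ

/-- Partial derivative of `F : ℝ⁶ → ℝ` in the `i`-th coordinate. -/
def pd (i : Fin 6) (F : R6 → ℝ) : R6 → ℝ :=
  fun p => deriv (fun s : ℝ => F (Function.update p i s)) (p i)

/-- Iterated partial derivatives, in the coordinates listed in `l`. -/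
def pdL : List (Fin 6) → (R6 → ℝ) → R6 → ℝ
  | [], F => F
  | i :: l, F => pd i (pdL l F)

/-- The number of `z`-derivatives occurring in the list `l`. -/
def zCount (l : List (Fin 6)) : ℕ := (l.filter fun i => (i : ℕ) < 4).length

/-- Admissible derivative lists: at most `nz` derivatives in `z = (z₃,z₂,z₁,z₀)`,
at most `nx` in `x`, and at most `nt` in `t`. -/
def AdmN (nz nx nt : ℕ) (l : List (Fin 6)) : Prop :=
  zCount l ≤ nz ∧ l.count (4 : Fin 6) ≤ nx ∧ l.count (5 : Fin 6) ≤ nt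

/-- `F` has all partial derivatives of admissible orders; they are continuous, and for
`|z| ≤ k`, `x ∈ ℝ`, `t ∈ [-1,1]` they are bounded by an increasing constant `C(k)`. -/
def HasBddPartials (F : R6 → ℝ) (P : List (Fin 6) → Prop) : Prop :=
  (∀ (l : List (Fin 6)) (i : Fin 6), P (i :: l) → ∀ p : R6,
      DifferentiableAt ℝ (fun s : ℝ => pdL l F (Function.update p i s)) (p i)) ∧
  (∀ l : List (Fin 6), P l → Continuous (pdL l F)) ∧
  ∃ C : ℝ → ℝ, Monotone C ∧ ∀ l : List (Fin 6), P l → ∀ k : ℝ, 0 < k →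
    ∀ p : R6, (∀ i : Fin 6, (i : ℕ) ≤ 3 → |p i| ≤ k) → |p 5| ≤ 1 →
      |pdL l F p| ≤ C k

/-- Condition (A1): `f ∈ C¹ₜ C¹¹_z W^{11,∞}ₓ` with bounds `C(k)` on `|z| ≤ k`. -/
def CondA1 (F : R6 → ℝ) : Prop := HasBddPartials F (AdmN 11 11 1)

/-- Iterated spatial derivative `∂ₓⁿ u(t,·)(x)` of a time-dependent function. -/
def dxs (n : ℕ) (u : ℝ → ℝ → ℝ) (t x : ℝ) : ℝ := iteratedDeriv n (u t) x

/-- Time derivative (within the time interval `I`). -/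
def dtv (I : Set ℝ) (u : ℝ → ℝ → ℝ) (t x : ℝ) : ℝ := derivWithin (fun s => u s x) I t

/-- The vector `(∂ₓ³u, ∂ₓ²u, ∂ₓu, u, x, t)`. -/
def evalVec (u : ℝ → ℝ → ℝ) (t x : ℝ) : R6 :=
  ![dxs 3 u t x, dxs 2 u t x, dxs 1 u t x, u t x, x, t]

/-- The vector `(∂ₓ³u₀, ∂ₓ²u₀, ∂ₓu₀, u₀, x, 0)` built from initial data. -/
def evalVec0 (u₀ : ℝ → ℝ) (x : ℝ) : R6 :=
  ![iteratedDeriv 3 u₀ x, iteratedDeriv 2 u₀ x, iteratedDeriv 1 u₀ x, u₀ x, x, 0]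

/-- Condition (A2): the modified diffusion ratio `f_{z₂}/f_{z₃}` has the form
`∂ₓ[g_D(∂ₓ²u,∂ₓu,u,x,t)] + g_H(∂ₓ³u,∂ₓ²u,∂ₓu,u,x,t)` where `g_H` vanishes to second
order at `z = 0`. -/
def CondA2 (F : R6 → ℝ) : Prop :=
  ∃ gD gH : R6 → ℝ,
    (∀ (p : R6) (s : ℝ), gD (Function.update p 0 s) = gD p) ∧
    HasBddPartials gD (AdmN 0 0 1) ∧
    HasBddPartials gH (AdmN 2 0 1) ∧
    (∀ p : R6, gH ![0, 0, 0, 0, p 4, p 5] = 0) ∧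
    (∀ j : Fin 6, (j : ℕ) ≤ 3 → ∀ p : R6, pd j gH ![0, 0, 0, 0, p 4, p 5] = 0) ∧
    ∀ u : ℝ → ℝ → ℝ, (∀ t : ℝ, ContDiff ℝ 4 (u t)) → ∀ t x : ℝ,
      pd 1 F (evalVec u t x) / pd 0 F (evalVec u t x) =
        deriv (fun y => gD (evalVec u t y)) x + gH (evalVec u t x)

/-- Condition (A3): `f(0,x,t) = 0`. -/
def CondA3 (F : R6 → ℝ) : Prop := ∀ x t : ℝ, F ![0, 0, 0, 0, x, t] = 0

/-- Continuity of `t ∈ I ↦ u(t,·) ∈ H^s`. -/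
def ContHs (s : ℝ) (I : Set ℝ) (u : ℝ → ℝ → ℝ) : Prop :=
  (∀ t ∈ I, MemHs s (u t)) ∧
  ∀ t ∈ I, ∀ ε : ℝ, 0 < ε → ∃ δ : ℝ, 0 < δ ∧ ∀ t' ∈ I, |t' - t| < δ →
    sobolevNorm s (fun x => u t' x - u t x) < ε

/-- Classical solution of `∂ₜu = f(∂ₓ³u, ∂ₓ²u, ∂ₓu, u, x, t)` on the time interval `I`. -/
def IsSol (F : R6 → ℝ) (I : Set ℝ) (u : ℝ → ℝ → ℝ) : Prop :=
  (∀ t ∈ I, ContDiff ℝ 3 (u t)) ∧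
  ∀ t ∈ I, ∀ x : ℝ, HasDerivWithinAt (fun s => u s x) (F (evalVec u t x)) I t

/-- Classical solution of `∂ₜu + f(∂ₓ³u, ∂ₓ²u, ∂ₓu, u, x, t) = -ε ∂ₓ⁴u` on `I`,
whose spatial sections are `Cⁿ`. -/
def IsRegSol (F : R6 → ℝ) (ε : ℝ) (I : Set ℝ) (n : ℕ) (u : ℝ → ℝ → ℝ) : Prop :=
  (∀ t ∈ I, ContDiff ℝ (n : ℕ∞) (u t)) ∧
  ∀ t ∈ I, ∀ x : ℝ,
    HasDerivWithinAt (fun s => u s x) (-F (evalVec u t x) - ε * dxs 4 u t x) I t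

/-- The dispersion quantity `λ(t) = ‖1/f_{z₃}(∂ₓ³u,…,x,t)‖_{L^∞ₓ}`. -/
def lam (F : R6 → ℝ) (u : ℝ → ℝ → ℝ) (t : ℝ) : ℝ := ⨆ x : ℝ, |1 / pd 0 F (evalVec u t x)|

/-- The dispersion quantity of the initial data. -/
def lam0 (F : R6 → ℝ) (u₀ : ℝ → ℝ) : ℝ := ⨆ x : ℝ, |1 / pd 0 F (evalVec0 u₀ x)|

/-- `M_ε(t) = sup_{0≤t'≤t} ‖u(t')‖_{H⁷} + ε sup_{0≤t'≤t} ‖u(t')‖_{H⁸}`. -/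
def Meps (ε : ℝ) (u : ℝ → ℝ → ℝ) (t : ℝ) : ℝ :=
  sSup ((fun t' => sobolevNorm 7 (u t')) '' Icc 0 t)
    + ε * sSup ((fun t' => sobolevNorm 8 (u t')) '' Icc 0 t)

/-- `k(t) = sup_{0≤t'≤t} max (‖u(t')‖_{H⁴}) (λ(t'))`. -/
def kfun (F : R6 → ℝ) (u : ℝ → ℝ → ℝ) (t : ℝ) : ℝ :=
  sSup ((fun t' => max (sobolevNorm 4 (u t')) (lam F u t')) '' Icc 0 t)

/-- A smooth cutoff `φ : [0,∞) → [0,1]` with `φ ≡ 1` on `[0,1]` and `φ ≡ 0` on `[2,∞)`. -/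
def IsCutoff (φ : ℝ → ℝ) : Prop :=
  ContDiff ℝ (⊤ : ℕ∞) φ ∧ (∀ r : ℝ, φ r ∈ Icc (0 : ℝ) 1) ∧ (∀ r : ℝ, r ≤ 1 → φ r = 1) ∧
    ∀ r : ℝ, 2 ≤ r → φ r = 0

/-- `v = (u₀)_δ`: the Fourier regularization of the data, `v̂(ξ) = û₀(ξ) φ(δ|ξ|)`. -/
def IsRegData (φ : ℝ → ℝ) (u₀ : ℝ → ℝ) (δ : ℝ) (v : ℝ → ℝ) : Prop :=
  ∀ ξ : ℝ, FT v ξ = FT u₀ ξ * (φ (δ * |ξ|) : ℂ)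

/-- Increasing function on `[0,∞)`. -/
def Incr1 (C : ℝ → ℝ) : Prop := MonotoneOn C (Ici 0)

/-- Function on `[0,∞)²` increasing in each argument. -/
def Incr2 (C : ℝ → ℝ → ℝ) : Prop :=
  (∀ a ∈ Ici (0 : ℝ), MonotoneOn (fun b => C a b) (Ici 0)) ∧
  ∀ b ∈ Ici (0 : ℝ), MonotoneOn (fun a => C a b) (Ici 0)

end KdVPaper

namespace KdVPaper

/-- Abstract bootstrap: under the two a priori inequalities, if the
existence interval `[0,T']` satisfies `T' ≤ T` then `M(t) ≤ 2M̄` on all of `[0,T']`. -/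
theorem bootstrap_norm_bound (T' : ℝ) (hT' : 0 < T')
    (C₁ C₂ : ℝ → ℝ → ℝ) (C₃ C₄ : ℝ → ℝ)
    (hC₁ : Incr2 C₁) (hC₂ : Incr2 C₂) (hC₃ : Incr1 C₃) (hC₄ : Incr1 C₄)
    (hC₁1 : ∀ a b, 1 ≤ C₁ a b) (hC₂1 : ∀ a b, 1 ≤ C₂ a b)
    (hC₃1 : ∀ a, 1 ≤ C₃ a) (hC₄1 : ∀ a, 1 ≤ C₄ a)
    (M k : ℝ → ℝ) (hMcont : ContinuousOn M (Icc 0 T'))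
    (hMpos : ∀ t ∈ Icc (0:ℝ) T', 0 ≤ M t) (hkpos : ∀ t ∈ Icc (0:ℝ) T', 0 ≤ k t)
    (hi : ∀ t ∈ Icc (0:ℝ) T', t * C₁ (M t) (k 0) < 1 →
      k t ≤ k 0 / (1 - t * C₁ (M t) (k 0)) + t * C₃ (M t))
    (hii : ∀ t ∈ Icc (0:ℝ) T', M t ≤ C₂ (k t) (t * C₄ (M t)) * (M 0 + t * C₄ (M t)))
    (Mb T : ℝ)
    (hMb : Mb = 2 * C₂ (4 * k 0) (4 * k 0) * (M 0 + 2 * k 0))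
    (hT : T = min (2 * k 0 / C₃ (2 * Mb))
      (min (1 / (2 * C₁ (2 * Mb) (k 0))) (2 * k 0 / C₄ (2 * Mb))))
    (hT'le : T' ≤ T) :
    ∀ t ∈ Icc (0:ℝ) T', M t ≤ 2 * Mb := by
  have h0T : (0:ℝ) ∈ Icc (0:ℝ) T' := ⟨le_refl 0, hT'.le⟩
  have hk0 : 0 ≤ k 0 := hkpos 0 h0T
  have hM0 : 0 ≤ M 0 := hMpos 0 h0T
  have hC3pos : (0:ℝ) < C₃ (2*Mb) := lt_of_lt_of_le one_pos (hC₃1 _)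
  have hC1pos : (0:ℝ) < C₁ (2*Mb) (k 0) := lt_of_lt_of_le one_pos (hC₁1 _ _)
  have hC4pos : (0:ℝ) < C₄ (2*Mb) := lt_of_lt_of_le one_pos (hC₄1 _)
  have hT1 : T ≤ 2 * k 0 / C₃ (2*Mb) := hT.le.trans (min_le_left _ _)
  have hT2 : T ≤ 1 / (2 * C₁ (2*Mb) (k 0)) :=
    hT.le.trans ((min_le_right _ _).trans (min_le_left _ _))
  have hT3 : T ≤ 2 * k 0 / C₄ (2*Mb) :=
    hT.le.trans ((min_le_right _ _).trans (min_le_right _ _))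
  have hk0pos : 0 < k 0 := by
    have h1 : (0:ℝ) < 2 * k 0 / C₃ (2*Mb) := lt_of_lt_of_le hT' (hT'le.trans hT1)
    have h2 : (0:ℝ) < 2 * k 0 := by
      have := mul_pos h1 hC3pos
      rwa [div_mul_cancel₀ _ (ne_of_gt hC3pos)] at this
    linarith
  have hC2ge1 : (1:ℝ) ≤ C₂ (4 * k 0) (4 * k 0) := hC₂1 _ _
  have hMbpos : 0 < Mb := by rw [hMb]; nlinarith
  have hMb0le : M 0 ≤ 2 * Mb := by rw [hMb]; nlinarith
  -- improvement step
  have key : ∀ s ∈ Icc (0:ℝ) T', M s ≤ 2 * Mb → M s ≤ Mb := by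
    intro s hs hMs
    have hs0 : 0 ≤ s := hs.1
    have hsT : s ≤ T := hs.2.trans hT'le
    have hMsnn : 0 ≤ M s := hMpos s hs
    have h2Mb : (0:ℝ) ≤ 2 * Mb := by linarith
    -- bound s * C₁(M s, k 0) ≤ 1/2
    have hm1 : C₁ (M s) (k 0) ≤ C₁ (2*Mb) (k 0) := hC₁.2 (k 0) hk0 hMsnn h2Mb hMs
    have hb1 : s * C₁ (M s) (k 0) ≤ 1/2 := by
      have h1 : s * C₁ (M s) (k 0) ≤ s * C₁ (2*Mb) (k 0) :=
        mul_le_mul_of_nonneg_left hm1 hs0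
      have h2 : s * C₁ (2*Mb) (k 0) ≤ T * C₁ (2*Mb) (k 0) :=
        mul_le_mul_of_nonneg_right hsT hC1pos.le
      have h3 : T * C₁ (2*Mb) (k 0) ≤ (1/(2*C₁ (2*Mb) (k 0))) * C₁ (2*Mb) (k 0) :=
        mul_le_mul_of_nonneg_right hT2 hC1pos.le
      have h4 : (1/(2*C₁ (2*Mb) (k 0))) * C₁ (2*Mb) (k 0) = 1/2 := by
        field_simp
      linarith
    -- bound s * C₃(M s) ≤ 2 k 0
    have hm3 : C₃ (M s) ≤ C₃ (2*Mb) := hC₃ hMsnn h2Mb hMs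
    have hb3 : s * C₃ (M s) ≤ 2 * k 0 := by
      have h1 : s * C₃ (M s) ≤ s * C₃ (2*Mb) := mul_le_mul_of_nonneg_left hm3 hs0
      have h2 : s * C₃ (2*Mb) ≤ T * C₃ (2*Mb) := mul_le_mul_of_nonneg_right hsT hC3pos.le
      have h3 : T * C₃ (2*Mb) ≤ 2 * k 0 := (le_div_iff₀ hC3pos).mp hT1
      linarith
    -- bound s * C₄(M s) ≤ 2 k 0
    have hm4 : C₄ (M s) ≤ C₄ (2*Mb) := hC₄ hMsnn h2Mb hMs
    have hb4 : s * C₄ (M s) ≤ 2 * k 0 := by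
      have h1 : s * C₄ (M s) ≤ s * C₄ (2*Mb) := mul_le_mul_of_nonneg_left hm4 hs0
      have h2 : s * C₄ (2*Mb) ≤ T * C₄ (2*Mb) := mul_le_mul_of_nonneg_right hsT hC4pos.le
      have h3 : T * C₄ (2*Mb) ≤ 2 * k 0 := (le_div_iff₀ hC4pos).mp hT3
      linarith
    -- bound k s ≤ 4 k 0
    have hks : k s ≤ 4 * k 0 := by
      have hi' := hi s hs (by linarith)
      have hden : (1:ℝ)/2 ≤ 1 - s * C₁ (M s) (k 0) := by linarith
      have hdiv : k 0 / (1 - s * C₁ (M s) (k 0)) ≤ 2 * k 0 := by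
        rw [div_le_iff₀ (by linarith)]
        nlinarith
      linarith
    -- conclude via (ii)
    have hksnn : 0 ≤ k s := hkpos s hs
    have hb4nn : 0 ≤ s * C₄ (M s) := mul_nonneg hs0 (by linarith [hC₄1 (M s)])
    have hc2a : C₂ (k s) (s * C₄ (M s)) ≤ C₂ (k s) (4 * k 0) :=
      hC₂.1 (k s) hksnn (mem_Ici.mpr hb4nn) (mem_Ici.mpr (by linarith)) (by linarith)
    have hc2b : C₂ (k s) (4 * k 0) ≤ C₂ (4 * k 0) (4 * k 0) :=
      hC₂.2 (4 * k 0) (mem_Ici.mpr (by linarith)) (mem_Ici.mpr hksnn) (mem_Ici.mpr (by linarith)) hks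
    have hii' := hii s hs
    have hprod : C₂ (k s) (s * C₄ (M s)) * (M 0 + s * C₄ (M s)) ≤
        C₂ (4 * k 0) (4 * k 0) * (M 0 + 2 * k 0) := by
      have hfac1 : 0 ≤ C₂ (k s) (s * C₄ (M s)) := by linarith [hC₂1 (k s) (s * C₄ (M s))]
      have := mul_le_mul (hc2a.trans hc2b) (by linarith : M 0 + s * C₄ (M s) ≤ M 0 + 2 * k 0)
        (by linarith) (by linarith)
      exact this
    rw [hMb]
    nlinarith
  -- conclusion via intermediate value theorem
  intro t ht
  by_contra h
  push_neg at h
  have hcont : ContinuousOn M (Icc 0 t) := hMcont.mono (Icc_subset_Icc le_rfl ht.2)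
  have hmem : (2 * Mb : ℝ) ∈ Icc (M 0) (M t) := ⟨hMb0le, h.le⟩
  obtain ⟨s, hsmem, hMs⟩ := intermediate_value_Icc ht.1 hcont hmem
  have hsT' : s ∈ Icc (0:ℝ) T' := ⟨hsmem.1, hsmem.2.trans ht.2⟩
  have := key s hsT' (le_of_eq hMs)
  rw [hMs] at this
  linarith

end KdVPaper
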